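/- With Sq² on the Z/2Z-span of (k,n)-truncated checkerboard Young diagrams as above, the kernel and image of Sq² decompose along irredundant diagrams: writing Ā(Λ) for the set of all diagrams obtained from an irredundant diagram Λ by adding any number of white boxes, the whole space is the direct sum over irredundant Λ of the spans of Ā(Λ), and Ker(Sq²) = ⊕_Λ (Ker(Sq²) ∩ span Ā(Λ)) and Im(Sq²) = ⊕_Λ (Im(Sq²) ∩ span Ā(Λ)), the sums over irredundant Λ. -/

import Mathlib

attribute [local instance] Classical.propDecidable

/-- A Young diagram, encoded by its sequence of row lengths: weakly decreasing and
eventually zero. -/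
def IsYoungDiagram (Λ : ℕ → ℕ) : Prop :=
  (∀ i j : ℕ, i ≤ j → Λ j ≤ Λ i) ∧ ∃ N, ∀ i, N ≤ i → Λ i = 0

/-- A `(k,n)`-truncated Young diagram: at most `k` rows, each of length at most `n - k`. -/
def IsTruncated (k n : ℕ) (Λ : ℕ → ℕ) : Prop :=
  IsYoungDiagram Λ ∧ (∀ i, k ≤ i → Λ i = 0) ∧ ∀ i, Λ i ≤ n - k

/-- Checkerboard coloring (`tw = false`: untwisted; `tw = true`: twisted). -/
def RemovableCB (tw : Bool) (Λ : ℕ → ℕ) (i : ℕ) : Prop :=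
  Λ (i + 1) < Λ i ∧ (i + Λ i) % 2 = (if tw then 1 else 0)

def AddableCB (tw : Bool) (k n : ℕ) (Λ : ℕ → ℕ) (i : ℕ) : Prop :=
  i < k ∧ Λ i < n - k ∧ (i = 0 ∨ Λ i < Λ (i - 1)) ∧ (i + Λ i) % 2 = (if tw then 0 else 1)

def IrredundantCB (tw : Bool) (Λ : ℕ → ℕ) : Prop := ∀ i, ¬ RemovableCB tw Λ i

/-- Adding one box at the end of row `i`. -/
def addOne (Λ : ℕ → ℕ) (i : ℕ) : ℕ → ℕ := Function.update Λ i (Λ i + 1)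

/-- `Λ' ∈ Ā(Λ)`: `Λ'` is obtained from `Λ` by adding finitely many white boxes. -/
def InAbar (tw : Bool) (k n : ℕ) (Λ Λ' : ℕ → ℕ) : Prop :=
  Relation.ReflTransGen (fun f g => ∃ i, AddableCB tw k n f i ∧ g = addOne f i) Λ Λ'

noncomputable def extB (k n : ℕ) {V : Type*} [AddCommGroup V] [Module (ZMod 2) V]
    (B : Module.Basis {Λ : ℕ → ℕ // IsTruncated k n Λ} (ZMod 2) V) (f : ℕ → ℕ) : V :=
  if h : IsTruncated k n f then B ⟨f, h⟩ else 0

/-- The span of `Ā(Λ)` inside `V`. -/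
noncomputable def spanAbar (tw : Bool) (k n : ℕ) {V : Type*} [AddCommGroup V]
    [Module (ZMod 2) V] (B : Module.Basis {Λ : ℕ → ℕ // IsTruncated k n Λ} (ZMod 2) V)
    (Λ : {Λ : ℕ → ℕ // IsTruncated k n Λ}) : Submodule (ZMod 2) V :=
  Submodule.span (ZMod 2)
    (⇑B '' {Λ' : {Λ : ℕ → ℕ // IsTruncated k n Λ} | InAbar tw k n Λ.1 Λ'.1})

/-!
Deleting removable white boxes strictly decreases the number of boxes, and the process is
confluent: if a white box could have been added last to a diagram of `Ā(Λ)` with `Λ`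
irredundant, deleting it stays in `Ā(Λ)`. The only point is that two distinct addable white
boxes can be added in either order, because two white boxes are never adjacent in a row.
Hence every diagram has a unique irredundant core, the sets `Ā(Λ)` partition the basis, and
their spans form an internal direct sum. `Sq²` maps each span into itself, and a linear map
preserving every summand of an internal direct sum has its kernel (by independence) and its
image (the sum of the images of the summands) decomposed along it.
-/

section Diagrams

variable {tw : Bool} {k n : ℕ}

lemma isTruncated_iff {Λ : ℕ → ℕ} :
    IsTruncated k n Λ ↔ Antitone Λ ∧ (∀ i, k ≤ i → Λ i = 0) ∧ ∀ i, Λ i ≤ n - k :=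
  ⟨fun ⟨⟨h, _⟩, hk, hb⟩ => ⟨fun _ _ hab => h _ _ hab, hk, hb⟩,
    fun ⟨h, hk, hb⟩ => ⟨⟨fun _ _ hab => h hab, k, hk⟩, hk, hb⟩⟩

def removeOne (Λ : ℕ → ℕ) (i : ℕ) : ℕ → ℕ := Function.update Λ i (Λ i - 1)

@[simp] lemma addOne_self (Λ : ℕ → ℕ) (i : ℕ) : addOne Λ i i = Λ i + 1 := by
  simp [addOne]

@[simp] lemma addOne_of_ne (Λ : ℕ → ℕ) {i j : ℕ} (h : j ≠ i) : addOne Λ i j = Λ j := by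
  simp [addOne, h]

@[simp] lemma removeOne_self (Λ : ℕ → ℕ) (i : ℕ) : removeOne Λ i i = Λ i - 1 := by
  simp [removeOne]

@[simp] lemma removeOne_of_ne (Λ : ℕ → ℕ) {i j : ℕ} (h : j ≠ i) : removeOne Λ i j = Λ j := by
  simp [removeOne, h]

lemma removeOne_le (Λ : ℕ → ℕ) (i j : ℕ) : removeOne Λ i j ≤ Λ j := by
  rcases eq_or_ne j i with rfl | h <;> simp [*]

lemma addOne_removeOne {Λ : ℕ → ℕ} {i : ℕ} (h : 0 < Λ i) : addOne (removeOne Λ i) i = Λ := by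
  ext j
  rcases eq_or_ne j i with rfl | h'
  · rw [addOne_self, removeOne_self]; omega
  · rw [addOne_of_ne _ h', removeOne_of_ne _ h']

lemma removeOne_addOne (Λ : ℕ → ℕ) (i : ℕ) : removeOne (addOne Λ i) i = Λ := by
  ext j; rcases eq_or_ne j i with rfl | h' <;> simp [*]

lemma removeOne_addOne_comm (Λ : ℕ → ℕ) {i j : ℕ} (h : i ≠ j) :
    removeOne (addOne Λ i) j = addOne (removeOne Λ j) i := by
  ext m
  rcases eq_or_ne m i with rfl | hi <;> rcases eq_or_ne m j with rfl | hj <;> simp_all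

lemma isTruncated_addOne {Λ : ℕ → ℕ} {i : ℕ} (hΛ : IsTruncated k n Λ)
    (ha : AddableCB tw k n Λ i) : IsTruncated k n (addOne Λ i) := by
  obtain ⟨hanti, hk, hb⟩ := isTruncated_iff.mp hΛ
  obtain ⟨hik, hlt, hrow, -⟩ := ha
  refine isTruncated_iff.mpr ⟨antitone_nat_of_succ_le fun m => ?_, fun m hm => ?_, fun m => ?_⟩
  · have hm : Λ (m + 1) ≤ Λ m := hanti (Nat.le_add_right m 1)
    by_cases hmi : m = i
    · subst hmi; rw [addOne_of_ne _ (show m + 1 ≠ m by omega), addOne_self]; omega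
    by_cases hmi' : m + 1 = i
    · subst hmi'
      rcases hrow with h0 | h0
      · omega
      · simp_all
    · simp [hmi, hmi', hm]
  · simp [show m ≠ i by omega, hk m hm]
  · rcases eq_or_ne m i with rfl | hm
    · rw [addOne_self]; omega
    · rw [addOne_of_ne _ hm]; exact hb m

lemma RemovableCB.lt {Λ : ℕ → ℕ} {i : ℕ} (hΛ : IsTruncated k n Λ) (hr : RemovableCB tw Λ i) :
    i < k := by
  by_contra h
  have := hΛ.2.1 i (by omega)
  have := hr.1
  omega

lemma isTruncated_removeOne {Λ : ℕ → ℕ} {i : ℕ} (hΛ : IsTruncated k n Λ)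
    (hr : RemovableCB tw Λ i) : IsTruncated k n (removeOne Λ i) := by
  obtain ⟨hanti, hk, hb⟩ := isTruncated_iff.mp hΛ
  refine isTruncated_iff.mpr ⟨antitone_nat_of_succ_le fun m => ?_,
    fun m hm => Nat.eq_zero_of_le_zero ((removeOne_le Λ i m).trans (hk m hm).le),
    fun m => (removeOne_le Λ i m).trans (hb m)⟩
  have hm : Λ (m + 1) ≤ Λ m := hanti (Nat.le_add_right m 1)
  by_cases hmi : m = i
  · subst hmi
    have := hr.1
    rw [removeOne_of_ne _ (show m + 1 ≠ m by omega), removeOne_self]; omega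
  · exact (removeOne_le Λ i _).trans (by simp [hmi, hm])

lemma addableCB_removeOne {Λ : ℕ → ℕ} {i : ℕ} (hΛ : IsTruncated k n Λ)
    (hr : RemovableCB tw Λ i) : AddableCB tw k n (removeOne Λ i) i := by
  refine ⟨hr.lt hΛ, ?_, ?_, ?_⟩
  · have := hΛ.2.2 i
    have := hr.1
    rw [removeOne_self]; omega
  · rcases Nat.eq_zero_or_pos i with h0 | h0
    · exact Or.inl h0
    · have := hΛ.1.1 (i - 1) i (Nat.sub_le i 1)
      have := hr.1
      right; rw [removeOne_self, removeOne_of_ne _ (show i - 1 ≠ i by omega)]; omega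
  · obtain ⟨hlt, hpar⟩ := hr
    simp only [removeOne_self]
    cases tw <;> simp only [if_true, if_false, Bool.false_eq_true] at hpar ⊢ <;> omega

lemma removableCB_addOne {Λ : ℕ → ℕ} {i : ℕ} (ha : AddableCB tw k n Λ i)
    (hle : Λ (i + 1) ≤ Λ i) : RemovableCB tw (addOne Λ i) i := by
  obtain ⟨-, -, -, hpar⟩ := ha
  refine ⟨by rw [addOne_of_ne _ (show i + 1 ≠ i by omega), addOne_self]; omega, ?_⟩
  simp only [addOne_self]
  cases tw <;> simp only [if_true, if_false, Bool.false_eq_true] at hpar ⊢ <;> omega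

lemma addableCB_of_addOne {Λ : ℕ → ℕ} {i j : ℕ} (hij : i ≠ j)
    (hi : AddableCB tw k n (addOne Λ j) i) (hj : AddableCB tw k n (addOne Λ i) j) :
    AddableCB tw k n Λ i := by
  obtain ⟨hik, hlt, hrow, hpar⟩ := hi
  simp only [addOne_of_ne Λ hij] at hlt hpar
  refine ⟨hik, hlt, ?_, hpar⟩
  rcases hrow with h0 | h0
  · exact Or.inl h0
  by_cases hji : i - 1 = j
  · -- two white boxes are never adjacent in a row: the parities would differ
    obtain ⟨-, -, -, hjpar⟩ := hj
    rw [addOne_of_ne Λ hij, hji, addOne_self] at h0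
    simp only [addOne_of_ne Λ (Ne.symm hij)] at hjpar
    right; rw [hji]
    cases tw <;> simp only [if_true, if_false, Bool.false_eq_true] at hpar hjpar <;> omega
  · exact Or.inr (by simpa [hji, addOne_of_ne Λ hij] using h0)

lemma InAbar.isTruncated {Λ Λ' : ℕ → ℕ} (hΛ : IsTruncated k n Λ) (h : InAbar tw k n Λ Λ') :
    IsTruncated k n Λ' := by
  induction h with
  | refl => exact hΛ
  | tail _ hstep ih =>
    obtain ⟨i, ha, rfl⟩ := hstep
    exact isTruncated_addOne ih ha

lemma InAbar.tail {Λ Λ' : ℕ → ℕ} {i : ℕ} (h : InAbar tw k n Λ Λ') (ha : AddableCB tw k n Λ' i) :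
    InAbar tw k n Λ (addOne Λ' i) :=
  Relation.ReflTransGen.tail h ⟨i, ha, rfl⟩

def boxCount (k : ℕ) (Λ : ℕ → ℕ) : ℕ := ∑ i ∈ Finset.range k, Λ i

lemma boxCount_removeOne_lt {Λ : ℕ → ℕ} {i : ℕ} (hik : i < k) (hpos : 0 < Λ i) :
    boxCount k (removeOne Λ i) < boxCount k Λ :=
  Finset.sum_lt_sum (fun j _ => removeOne_le Λ i j)
    ⟨i, Finset.mem_range.mpr hik, by rw [removeOne_self]; omega⟩

lemma exists_irredundantCB_inAbar {Λ' : ℕ → ℕ} (hΛ' : IsTruncated k n Λ') :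
    ∃ Λ, IsTruncated k n Λ ∧ IrredundantCB tw Λ ∧ InAbar tw k n Λ Λ' := by
  induction hN : boxCount k Λ' using Nat.strong_induction_on generalizing Λ' with
  | _ N ih =>
    by_cases hirr : IrredundantCB tw Λ'
    · exact ⟨Λ', hΛ', hirr, .refl⟩
    obtain ⟨i, hr⟩ : ∃ i, RemovableCB tw Λ' i := by simpa [IrredundantCB] using hirr
    have hpos : 0 < Λ' i := by have := hr.1; omega
    obtain ⟨Λ, hΛ, hirr, hin⟩ := ih _ (hN ▸ boxCount_removeOne_lt (hr.lt hΛ') hpos)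
      (isTruncated_removeOne hΛ' hr) rfl
    exact ⟨Λ, hΛ, hirr, addOne_removeOne hpos ▸ hin.tail (addableCB_removeOne hΛ' hr)⟩

lemma InAbar.of_addOne {Λ Λ' : ℕ → ℕ} {i : ℕ} (hΛ : IrredundantCB tw Λ)
    (h : InAbar tw k n Λ (addOne Λ' i)) (ha : AddableCB tw k n Λ' i)
    (hle : Λ' (i + 1) ≤ Λ' i) : InAbar tw k n Λ Λ' := by
  generalize hΛ'' : addOne Λ' i = Λ'' at h
  induction h generalizing Λ' i with
  | refl => exact absurd (hΛ'' ▸ removableCB_addOne ha hle) (hΛ i)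
  | @tail M _ hΛM hstep ih =>
    obtain ⟨j, haj, rfl⟩ := hstep
    rcases eq_or_ne j i with rfl | hji
    · rwa [← removeOne_addOne Λ' j, hΛ'', removeOne_addOne]
    -- the common predecessor of `M` and `Λ'`
    set e := removeOne Λ' j
    have hM : M = addOne e i := by
      rw [← removeOne_addOne M j, ← hΛ'', removeOne_addOne_comm Λ' (Ne.symm hji)]
    have hpos : 0 < Λ' j := by
      have := congrFun hΛ'' j
      simp only [addOne_self, addOne_of_ne Λ' hji] at this
      omega
    have hΛ' : Λ' = addOne e j := (addOne_removeOne hpos).symm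
    have hei : AddableCB tw k n e i := addableCB_of_addOne (Ne.symm hji) (hΛ' ▸ ha) (hM ▸ haj)
    have hej : AddableCB tw k n e j := addableCB_of_addOne hji (hM ▸ haj) (hΛ' ▸ ha)
    have hle' : e (i + 1) ≤ e i := by
      simpa [e, removeOne_of_ne Λ' (Ne.symm hji)] using (removeOne_le Λ' j (i + 1)).trans hle
    exact hΛ' ▸ (ih hei hle' hM.symm).tail hej

lemma InAbar.eq_of_irredundantCB {Λ Λ' : ℕ → ℕ} (hΛ : IsTruncated k n Λ)
    (h : InAbar tw k n Λ Λ') (hirr : IrredundantCB tw Λ') : Λ = Λ' := by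
  rcases Relation.ReflTransGen.cases_tail h with rfl | ⟨M, hM, i, ha, rfl⟩
  · rfl
  · have hle : M (i + 1) ≤ M i := (InAbar.isTruncated hΛ hM).1.1 i (i + 1) (Nat.le_add_right i 1)
    exact absurd (removableCB_addOne ha hle) (hirr i)

lemma irredundantCB_inAbar_unique {Λ₁ Λ₂ Λ' : ℕ → ℕ} (hΛ₁ : IsTruncated k n Λ₁)
    (hΛ₂ : IsTruncated k n Λ₂) (hirr₁ : IrredundantCB tw Λ₁) (hirr₂ : IrredundantCB tw Λ₂)
    (h₁ : InAbar tw k n Λ₁ Λ') (h₂ : InAbar tw k n Λ₂ Λ') : Λ₁ = Λ₂ := by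
  have hΛ' := h₁.isTruncated hΛ₁
  induction hN : boxCount k Λ' using Nat.strong_induction_on generalizing Λ' with
  | _ N ih =>
    by_cases hirr : IrredundantCB tw Λ'
    · exact (h₁.eq_of_irredundantCB hΛ₁ hirr).trans (h₂.eq_of_irredundantCB hΛ₂ hirr).symm
    obtain ⟨i, hr⟩ : ∃ i, RemovableCB tw Λ' i := by simpa [IrredundantCB] using hirr
    have hpos : 0 < Λ' i := by have := hr.1; omega
    have htr := isTruncated_removeOne hΛ' hr
    have ha := addableCB_removeOne hΛ' hr
    have hle := htr.1.1 i (i + 1) (Nat.le_add_right i 1)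
    rw [← addOne_removeOne hpos] at h₁ h₂
    exact ih _ (hN ▸ boxCount_removeOne_lt (hr.lt hΛ') hpos)
      (h₁.of_addOne hirr₁ ha hle) (h₂.of_addOne hirr₂ ha hle) htr rfl

end Diagrams

section Decomposition

variable {R M ι : Type*}

section Semiring

variable [Semiring R] [AddCommMonoid M] [Module R M]

open Function in
lemma LinearIndependent.iSupIndep_span_image {v : ι → M} (hv : LinearIndependent R v)
    {J : Type*} {s : J → Set ι} (hs : Pairwise (Disjoint on s)) :
    iSupIndep fun j => Submodule.span R (v '' s j) := by
  refine iSupIndep_def.mpr fun j => ?_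
  refine (hv.disjoint_span_image (s := s j) (t := (s j)ᶜ) disjoint_compl_right).mono_right ?_
  refine iSup₂_le fun j' hj' => Submodule.span_mono (Set.image_mono ?_)
  exact (hs hj').symm.subset_compl_left

lemma Module.Basis.iSup_span_image_preimage_singleton {J : Type*} (B : Module.Basis ι R M)
    (c : ι → J) : ⨆ j, Submodule.span R (B '' (c ⁻¹' {j})) = ⊤ := by
  rw [← Submodule.span_iUnion, ← Set.image_iUnion, ← Set.preimage_iUnion, Set.iUnion_of_singleton,
    Set.preimage_univ, Set.image_univ, B.span_eq]

lemma LinearMap.range_eq_iSup_range_inf {J : Type*} {P : J → Submodule R M}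
    (htop : ⨆ j, P j = ⊤) {f : M →ₗ[R] M} (hf : ∀ j, (P j).map f ≤ P j) :
    range f = ⨆ j, range f ⊓ P j := by
  refine le_antisymm ?_ (iSup_le fun _ => inf_le_left)
  calc range f = ⨆ j, (P j).map f := by rw [range_eq_map, ← htop, Submodule.map_iSup]
    _ ≤ ⨆ j, range f ⊓ P j := iSup_mono fun j => le_inf map_le_range (hf j)

end Semiring

variable [Ring R] [AddCommGroup M] [Module R M]

lemma LinearMap.ker_eq_iSup_ker_inf {J : Type*} {P : J → Submodule R M} (hind : iSupIndep P)
    (htop : ⨆ j, P j = ⊤) {f : M →ₗ[R] M} (hf : ∀ j, (P j).map f ≤ P j) :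
    ker f = ⨆ j, ker f ⊓ P j := by
  refine le_antisymm (fun x hx => ?_) (iSup_le fun _ => inf_le_left)
  obtain ⟨c, hc, rfl⟩ := (Submodule.mem_iSup_iff_exists_finsupp P x).mp (htop ▸ Submodule.mem_top)
  have hfc : ∀ j ∈ c.support, f (c j) = 0 :=
    (iSupIndep_iff_finsetSum_eq_zero_imp_eq_zero P).mp hind c.support (fun j => f (c j))
      (fun j _ => hf j ⟨c j, hc j, rfl⟩) (by simpa [Finsupp.sum, map_sum] using hx)
  exact Submodule.sum_mem _ fun j hj => Submodule.mem_iSup_of_mem j ⟨hfc j hj, hc j⟩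

end Decomposition

section Core

variable {tw : Bool} {k n : ℕ}

noncomputable def irredundantCore (tw : Bool) (k n : ℕ) (Λ' : {Λ : ℕ → ℕ // IsTruncated k n Λ}) :
    {Λ : {Λ : ℕ → ℕ // IsTruncated k n Λ} // IrredundantCB tw Λ.1} :=
  let h := exists_irredundantCB_inAbar (tw := tw) Λ'.2
  ⟨⟨h.choose, h.choose_spec.1⟩, h.choose_spec.2.1⟩

lemma inAbar_irredundantCore (Λ' : {Λ : ℕ → ℕ // IsTruncated k n Λ}) :
    InAbar tw k n (irredundantCore tw k n Λ').1.1 Λ'.1 :=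
  (exists_irredundantCB_inAbar Λ'.2).choose_spec.2.2

lemma inAbar_iff_irredundantCore_eq
    (Λ : {Λ : {Λ : ℕ → ℕ // IsTruncated k n Λ} // IrredundantCB tw Λ.1})
    (Λ' : {Λ : ℕ → ℕ // IsTruncated k n Λ}) :
    InAbar tw k n Λ.1.1 Λ'.1 ↔ irredundantCore tw k n Λ' = Λ := by
  refine ⟨fun h => ?_, by rintro rfl; exact inAbar_irredundantCore Λ'⟩
  exact Subtype.ext <| Subtype.ext <| irredundantCB_inAbar_unique (irredundantCore tw k n Λ').1.2
    Λ.1.2 (irredundantCore tw k n Λ').2 Λ.2 (inAbar_irredundantCore Λ') h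

variable {V : Type*} [AddCommGroup V] [Module (ZMod 2) V]
  (B : Module.Basis {Λ : ℕ → ℕ // IsTruncated k n Λ} (ZMod 2) V)

lemma spanAbar_eq_span_preimage
    (Λ : {Λ : {Λ : ℕ → ℕ // IsTruncated k n Λ} // IrredundantCB tw Λ.1}) :
    spanAbar tw k n B Λ.1 = Submodule.span (ZMod 2) (B '' (irredundantCore tw k n ⁻¹' {Λ})) := by
  simp only [spanAbar, inAbar_iff_irredundantCore_eq]
  rfl

lemma iSup_spanAbar_eq_top :
    ⨆ Λ : {Λ : {Λ : ℕ → ℕ // IsTruncated k n Λ} // IrredundantCB tw Λ.1},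
      spanAbar tw k n B Λ.1 = ⊤ := by
  simpa only [spanAbar_eq_span_preimage] using
    B.iSup_span_image_preimage_singleton (irredundantCore tw k n)

lemma iSupIndep_spanAbar :
    iSupIndep fun Λ : {Λ : {Λ : ℕ → ℕ // IsTruncated k n Λ} // IrredundantCB tw Λ.1} =>
      spanAbar tw k n B Λ.1 := by
  simpa only [spanAbar_eq_span_preimage] using
    B.linearIndependent.iSupIndep_span_image (pairwise_disjoint_fiber (irredundantCore tw k n))

lemma map_spanAbar_le {B} {Sq : V →ₗ[ZMod 2] V}
    (hSq : ∀ Λ : {Λ : ℕ → ℕ // IsTruncated k n Λ},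
      Sq (B Λ) = ∑ i ∈ Finset.range k,
        if AddableCB tw k n Λ.1 i then extB k n B (addOne Λ.1 i) else 0)
    (Λ : {Λ : ℕ → ℕ // IsTruncated k n Λ}) :
    (spanAbar tw k n B Λ).map Sq ≤ spanAbar tw k n B Λ := by
  rw [spanAbar, Submodule.map_span, Submodule.span_le]
  rintro _ ⟨_, ⟨Λ', hΛ', rfl⟩, rfl⟩
  rw [hSq Λ']
  refine Submodule.sum_mem _ fun i _ => ?_
  split_ifs with ha
  · have htr := isTruncated_addOne Λ'.2 ha
    rw [extB, dif_pos htr]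
    exact Submodule.subset_span ⟨⟨_, htr⟩, InAbar.tail hΛ' ha, rfl⟩
  · exact Submodule.zero_mem _

end Core

theorem stmt12_general (tw : Bool) (k n : ℕ)
    (V : Type*) [AddCommGroup V] [Module (ZMod 2) V]
    (B : Module.Basis {Λ : ℕ → ℕ // IsTruncated k n Λ} (ZMod 2) V)
    (Sq : V →ₗ[ZMod 2] V)
    (hSq : ∀ Λ : {Λ : ℕ → ℕ // IsTruncated k n Λ},
      Sq (B Λ) = ∑ i ∈ Finset.range k,
        if AddableCB tw k n Λ.1 i then extB k n B (addOne Λ.1 i) else 0) :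
    (⨆ Λ : {Λ : {Λ : ℕ → ℕ // IsTruncated k n Λ} // IrredundantCB tw Λ.1},
        spanAbar tw k n B Λ.1) = ⊤ ∧
    iSupIndep (fun Λ : {Λ : {Λ : ℕ → ℕ // IsTruncated k n Λ} // IrredundantCB tw Λ.1} =>
        spanAbar tw k n B Λ.1) ∧
    LinearMap.ker Sq =
      (⨆ Λ : {Λ : {Λ : ℕ → ℕ // IsTruncated k n Λ} // IrredundantCB tw Λ.1},
        LinearMap.ker Sq ⊓ spanAbar tw k n B Λ.1) ∧
    LinearMap.range Sq =
      (⨆ Λ : {Λ : {Λ : ℕ → ℕ // IsTruncated k n Λ} // IrredundantCB tw Λ.1},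
        LinearMap.range Sq ⊓ spanAbar tw k n B Λ.1) := by
  have hmap := fun Λ : {Λ : {Λ : ℕ → ℕ // IsTruncated k n Λ} // IrredundantCB tw Λ.1} =>
    map_spanAbar_le hSq Λ.1
  exact ⟨iSup_spanAbar_eq_top B, iSupIndep_spanAbar B,
    LinearMap.ker_eq_iSup_ker_inf (iSupIndep_spanAbar B) (iSup_spanAbar_eq_top B) hmap,
    LinearMap.range_eq_iSup_range_inf (iSup_spanAbar_eq_top B) hmap⟩

/-- the whole space is the direct sum, over irredundant diagrams `Λ`, of
the spans of `Ā(Λ)`, and both `Ker Sq²` and `Im Sq²` decompose accordingly. -/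
theorem stmt12 (tw : Bool) (k n : ℕ) (hkn : k ≤ n)
    (V : Type*) [AddCommGroup V] [Module (ZMod 2) V]
    (B : Module.Basis {Λ : ℕ → ℕ // IsTruncated k n Λ} (ZMod 2) V)
    (Sq : V →ₗ[ZMod 2] V)
    (hSq : ∀ Λ : {Λ : ℕ → ℕ // IsTruncated k n Λ},
      Sq (B Λ) = ∑ i ∈ Finset.range k,
        if AddableCB tw k n Λ.1 i then extB k n B (addOne Λ.1 i) else 0) :
    (⨆ Λ : {Λ : {Λ : ℕ → ℕ // IsTruncated k n Λ} // IrredundantCB tw Λ.1},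
        spanAbar tw k n B Λ.1) = ⊤ ∧
    iSupIndep (fun Λ : {Λ : {Λ : ℕ → ℕ // IsTruncated k n Λ} // IrredundantCB tw Λ.1} =>
        spanAbar tw k n B Λ.1) ∧
    LinearMap.ker Sq =
      (⨆ Λ : {Λ : {Λ : ℕ → ℕ // IsTruncated k n Λ} // IrredundantCB tw Λ.1},
        LinearMap.ker Sq ⊓ spanAbar tw k n B Λ.1) ∧
    LinearMap.range Sq =
      (⨆ Λ : {Λ : {Λ : ℕ → ℕ // IsTruncated k n Λ} // IrredundantCB tw Λ.1},
        LinearMap.range Sq ⊓ spanAbar tw k n B Λ.1) :=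
  stmt12_general tw k n V B Sq hSq
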